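/- Let θ = 2mπ/n, where m and n are coprime positive integers. If cos θ is algebraic of degree at most 2 over ℚ, then n is one of 1, 2, 3, 4, 5, 6, 8, 10, 12. If moreover sin θ is also algebraic of degree at most 2 over ℚ, then n is one of 1, 2, 3, 4, 6, 8, 12. -/
import Mathlib


open EuclideanGeometry Real

noncomputable section

/-- A point of the Euclidean plane. -/
abbrev Pt : Type := EuclideanSpace ℝ (Fin 2)

/-- A triangle, given by its three vertices. -/
abbrev Tri : Type := Fin 3 → Pt

/-- A genuine (nondegenerate) triangle. -/
def IsTriangle (T : Tri) : Prop := AffineIndependent ℝ T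

/-- The closed triangle (convex hull of the vertices). -/
def triSet (T : Tri) : Set Pt := convexHull ℝ (Set.range T)

/-- Two triangles are congruent iff corresponding distances agree
up to a permutation of the vertices. -/
def CongruentTri (T₁ T₂ : Tri) : Prop :=
  ∃ σ : Equiv.Perm (Fin 3), ∀ i j : Fin 3, dist (T₁ i) (T₁ j) = dist (T₂ (σ i)) (T₂ (σ j))

/-- An `N`-tiling of the triangle `ABC` by the tile `T`: a family of `N` triangles,
each congruent to `T`, with pairwise disjoint interiors, whose union is the
closed triangle `ABC`. -/
structure IsTiling (N : ℕ) (ABC T : Tri) (tiles : Fin N → Tri) : Prop where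
  congr : ∀ i, CongruentTri (tiles i) T
  disj : ∀ i j, i ≠ j → interior (triSet (tiles i)) ∩ interior (triSet (tiles j)) = ∅
  cover : (⋃ i, triSet (tiles i)) = triSet ABC

/-- The interior angle of the triangle `T` at its `k`-th vertex. -/
def triAngle (T : Tri) (k : Fin 3) : ℝ := ∠ (T (k + 1)) (T k) (T (k + 2))

/-- The side of `T` opposite to the `k`-th vertex. -/
def sideLen (T : Tri) (k : Fin 3) : ℝ := dist (T (k + 1)) (T (k + 2))

/-- `T` has angles `α`, `β`, `γ` (at vertices `0`, `1`, `2`, which are opposite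
the sides of lengths `a`, `b`, `c` respectively). -/
def HasAngles (T : Tri) (α β γ : ℝ) : Prop :=
  triAngle T 0 = α ∧ triAngle T 1 = β ∧ triAngle T 2 = γ

/-- Two triangles are similar iff corresponding distances agree up to a
permutation of the vertices and a positive scale factor. -/
def SimilarTri (T₁ T₂ : Tri) : Prop :=
  ∃ r : ℝ, 0 < r ∧ ∃ σ : Equiv.Perm (Fin 3),
    ∀ i j : Fin 3, dist (T₁ i) (T₁ j) = r * dist (T₂ (σ i)) (T₂ (σ j))

/-- `x` is algebraic of degree at most 2 over `ℚ`: it is a root of a nonzero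
rational polynomial of degree at most 2. -/
def DegLeTwo (x : ℝ) : Prop :=
  ∃ p : Polynomial ℚ, p ≠ 0 ∧ p.degree ≤ 2 ∧ Polynomial.aeval x p = 0

section NivenAux

open Polynomial Complex

private lemma niven_key (N : ℕ) (hN : 0 < N) (ζ : ℂ) (hζ : IsPrimitiveRoot ζ N)
    (x : ℝ) (hx : (x : ℂ) = (ζ + ζ⁻¹) / 2)
    (hdeg : ∃ p : Polynomial ℚ, p ≠ 0 ∧ p.degree ≤ 2 ∧ Polynomial.aeval x p = 0) :
    N.totient ≤ 4 := by
  obtain ⟨p, hp0, hpd, hroot⟩ := hdeg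
  have hζ0 : ζ ≠ 0 := hζ.ne_zero hN.ne'
  have hnd : p.natDegree ≤ 2 := natDegree_le_iff_degree_le.mpr hpd
  set p0 := p.coeff 0 with hp0def
  set p1 := p.coeff 1 with hp1def
  set p2 := p.coeff 2 with hp2def
  -- transfer the root relation to ℂ
  have hrootC : Polynomial.aeval ((x : ℂ)) p = 0 := by
    have : ((x : ℝ) : ℂ) = algebraMap ℝ ℂ x := rfl
    rw [this, Polynomial.aeval_algebraMap_apply, hroot, map_zero]
  have hexp : (p0 : ℂ) + (p1 : ℂ) * (x : ℂ) + (p2 : ℂ) * (x : ℂ) ^ 2 = 0 := by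
    have := Polynomial.aeval_eq_sum_range' (p := p) (n := 3) (by omega) ((x : ℂ))
    rw [this] at hrootC
    simp [Finset.sum_range_succ, Rat.smul_def] at hrootC
    linear_combination hrootC
  -- clear denominators
  have h2 : 4 * (p0 : ℂ) * ζ ^ 2 + 2 * (p1 : ℂ) * ζ * (ζ ^ 2 + 1)
      + (p2 : ℂ) * (ζ ^ 2 + 1) ^ 2 = 0 := by
    have hxz : (x : ℂ) * (2 * ζ) = ζ ^ 2 + 1 := by
      rw [hx]; field_simp
    have h4 : ((p0 : ℂ) + (p1 : ℂ) * (x : ℂ) + (p2 : ℂ) * (x : ℂ) ^ 2) * (2 * ζ) ^ 2 = 0 := by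
      rw [hexp]; ring
    calc 4 * (p0 : ℂ) * ζ ^ 2 + 2 * (p1 : ℂ) * ζ * (ζ ^ 2 + 1) + (p2 : ℂ) * (ζ ^ 2 + 1) ^ 2
        = ((p0 : ℂ) + (p1 : ℂ) * (x : ℂ) + (p2 : ℂ) * (x : ℂ) ^ 2) * (2 * ζ) ^ 2 := by
          rw [← hxz]; ring
      _ = 0 := h4
  -- the quartic rational polynomial annihilating ζ
  set q : Polynomial ℚ := C p2 * X ^ 4 + C (2 * p1) * X ^ 3 + C (4 * p0 + 2 * p2) * X ^ 2
      + C (2 * p1) * X + C p2 with hqdef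
  have haev : Polynomial.aeval ζ q = 0 := by
    rw [hqdef]
    simp only [map_add, map_mul, map_pow, Polynomial.aeval_X, Polynomial.aeval_C, eq_ratCast]
    push_cast
    linear_combination h2
  have h012 : p0 ≠ 0 ∨ p1 ≠ 0 ∨ p2 ≠ 0 := by
    have hlc : p.coeff p.natDegree ≠ 0 := mt Polynomial.leadingCoeff_eq_zero.mp hp0
    interval_cases h : p.natDegree
    · exact Or.inl hlc
    · exact Or.inr (Or.inl hlc)
    · exact Or.inr (Or.inr hlc)
  have hq0 : q ≠ 0 := by
    intro h
    have c4 : q.coeff 4 = p2 := by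
      simp only [hqdef, coeff_add, coeff_C_mul, coeff_X_pow, coeff_C, coeff_X]
      norm_num
    have c3 : q.coeff 3 = 2 * p1 := by
      simp only [hqdef, coeff_add, coeff_C_mul, coeff_X_pow, coeff_C, coeff_X]
      norm_num
    have c2 : q.coeff 2 = 4 * p0 + 2 * p2 := by
      simp only [hqdef, coeff_add, coeff_C_mul, coeff_X_pow, coeff_C, coeff_X]
      norm_num
    rw [h] at c4 c3 c2
    simp only [Polynomial.coeff_zero] at c4 c3 c2
    rcases h012 with h' | h' | h'
    · exact h' (by linarith)
    · exact h' (by linarith)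
    · exact h' (by linarith)
  have hqd : q.natDegree ≤ 4 := by
    rw [hqdef]; compute_degree
  have hdvd : minpoly ℚ ζ ∣ q := minpoly.dvd ℚ ζ haev
  have hmin : Polynomial.cyclotomic N ℚ = minpoly ℚ ζ :=
    Polynomial.cyclotomic_eq_minpoly_rat hζ hN
  have := Polynomial.natDegree_le_of_dvd hdvd hq0
  rw [← hmin, Polynomial.natDegree_cyclotomic] at this
  exact le_trans this hqd


private lemma totient_le_four_mem (n : ℕ) (hn : 0 < n) (h : n.totient ≤ 4) :
    n ∈ ({1, 2, 3, 4, 5, 6, 8, 10, 12} : Set ℕ) := by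
  have hnt : 0 < n.totient := Nat.totient_pos.mpr hn
  have hdvd : n ∣ 120 := by
    rw [Nat.dvd_iff_prime_pow_dvd_dvd]
    intro p k hp hpk
    rcases Nat.eq_zero_or_pos k with rfl | hk
    · simpa using one_dvd _
    have hpn : p.Prime := hp
    have hppos : 0 < p ^ k := pow_pos hpn.pos k
    have hφdvd : (p ^ k).totient ∣ n.totient := Nat.totient_dvd_of_dvd hpk
    have hle : (p ^ k).totient ≤ 4 := le_trans (Nat.le_of_dvd hnt hφdvd) h
    rw [Nat.totient_prime_pow hpn hk] at hle
    have h2p : 2 ≤ p := hpn.two_le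
    have hpk1 : 1 ≤ p ^ (k - 1) := Nat.one_le_pow _ _ hpn.pos
    have hp14 : p - 1 ≤ 4 := le_trans (Nat.le_mul_of_pos_left _ hpk1) hle
    have hple : p ≤ 5 := by omega
    interval_cases p
    · -- p = 2
      have hk3 : k ≤ 3 := by
        by_contra hgt
        have : (2:ℕ) ^ 3 ≤ 2 ^ (k - 1) := Nat.pow_le_pow_right (by norm_num) (by omega)
        omega
      exact dvd_trans (pow_dvd_pow 2 hk3) (by norm_num)
    · -- p = 3
      have hk1 : k ≤ 1 := by
        by_contra hgt
        have : (3:ℕ) ^ 1 ≤ 3 ^ (k - 1) := Nat.pow_le_pow_right (by norm_num) (by omega)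
        omega
      exact dvd_trans (pow_dvd_pow 3 hk1) (by norm_num)
    · exact absurd hpn (by norm_num)
    · -- p = 5
      have hk1 : k ≤ 1 := by
        by_contra hgt
        have : (5:ℕ) ^ 1 ≤ 5 ^ (k - 1) := Nat.pow_le_pow_right (by norm_num) (by omega)
        omega
      exact dvd_trans (pow_dvd_pow 5 hk1) (by norm_num)
  have hle120 : n ≤ 120 := Nat.le_of_dvd (by norm_num) hdvd
  simp only [Set.mem_insert_iff, Set.mem_singleton_iff]
  interval_cases n <;> revert h hdvd <;> decide


private lemma cos_form (a : ℝ) : ((Real.cos a : ℝ) : ℂ) =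
    (Complex.exp (a * Complex.I) + (Complex.exp (a * Complex.I))⁻¹) / 2 := by
  rw [Complex.ofReal_cos]
  have hinv : (Complex.exp (↑a * Complex.I))⁻¹ = Complex.exp (-↑a * Complex.I) := by
    rw [← Complex.exp_neg]; congr 1; ring
  rw [hinv, ← Complex.two_cos]; ring


private lemma sin_exclude (θ : ℝ) (j : ℤ) (hθ' : π / 2 - θ = 2 * π * (j : ℝ) / 20)
    (hodd : j % 2 = 1) (h5 : j % 5 ≠ 0)
    (hs : ∃ p : Polynomial ℚ, p ≠ 0 ∧ p.degree ≤ 2 ∧ Polynomial.aeval (Real.sin θ) p = 0) :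
    False := by
  obtain ⟨k, hk20⟩ : ∃ k : ℕ, (k : ℤ) = j % 20 :=
    ⟨(j % 20).toNat, Int.toNat_of_nonneg (Int.emod_nonneg j (by norm_num))⟩
  have hklt : k < 20 := by omega
  have hkco : Nat.Coprime k 20 := by
    have h1 : k % 2 = 1 := by omega
    have h2 : k % 5 ≠ 0 := by omega
    interval_cases k <;> first | decide | (exfalso; omega)
  have hprim : IsPrimitiveRoot (Complex.exp (2 * ↑π * Complex.I * (↑k / 20))) 20 := by
    have := Complex.isPrimitiveRoot_exp_of_coprime k 20 (by norm_num) hkco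
    simpa using this
  have h20 : Nat.totient 20 ≤ 4 := by
    apply niven_key 20 (by norm_num) _ hprim (Real.sin θ) _ hs
    have hz : Complex.exp (2 * ↑π * Complex.I * (↑k / 20)) =
        Complex.exp (((π / 2 - θ : ℝ) : ℂ) * Complex.I) := by
      rw [Complex.exp_eq_exp_iff_exists_int]
      refine ⟨-(j / 20), ?_⟩
      have hkj : (k : ℂ) = (j : ℂ) + 20 * ((-(j / 20) : ℤ) : ℂ) := by
        have : (k : ℤ) = j + 20 * (-(j / 20)) := by omega
        exact_mod_cast congrArg (Int.cast : ℤ → ℂ) this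
      have hcast : ((π / 2 - θ : ℝ) : ℂ) = 2 * (π : ℂ) * (j : ℂ) / 20 := by
        rw [hθ']; push_cast; ring
      rw [hcast]
      linear_combination (π * Complex.I / 10) * hkj
    rw [hz, ← Real.cos_pi_div_two_sub θ]
    exact cos_form (π / 2 - θ)
  revert h20; decide


end NivenAux

/-- Let `θ = 2mπ/n` with `m`, `n` coprime positive integers.  If `cos θ` is
algebraic of degree at most 2 over `ℚ`, then `n ∈ {1,2,3,4,5,6,8,10,12}`;
if moreover `sin θ` is algebraic of degree at most 2 over `ℚ`, then
`n ∈ {1,2,3,4,6,8,12}`. -/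
theorem niven_degree_two (m n : ℕ) (hm : 0 < m) (hn : 0 < n)
    (hco : Nat.Coprime m n) (θ : ℝ) (hθ : θ = 2 * (m : ℝ) * π / (n : ℝ))
    (hcos : DegLeTwo (Real.cos θ)) :
    n ∈ ({1, 2, 3, 4, 5, 6, 8, 10, 12} : Set ℕ) ∧
      (DegLeTwo (Real.sin θ) → n ∈ ({1, 2, 3, 4, 6, 8, 12} : Set ℕ)) := by
  have hn0 : (n : ℝ) ≠ 0 := Nat.cast_ne_zero.mpr hn.ne'
  have htot : n.totient ≤ 4 := by
    have hprim : IsPrimitiveRoot (Complex.exp (2 * ↑π * Complex.I * (↑m / ↑n))) n := by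
      simpa using Complex.isPrimitiveRoot_exp_of_coprime m n hn.ne' hco
    apply niven_key n hn _ hprim (Real.cos θ) _ hcos
    have hz : Complex.exp (2 * ↑π * Complex.I * (↑m / ↑n)) =
        Complex.exp ((θ : ℂ) * Complex.I) := by
      congr 1
      rw [hθ]
      have hn0' : (n : ℂ) ≠ 0 := Nat.cast_ne_zero.mpr hn.ne'
      push_cast
      field_simp
    rw [hz]
    exact cos_form θ
  have hmem := totient_le_four_mem n hn htot
  refine ⟨hmem, fun hsin => ?_⟩
  have h5m : ¬ (5 ∣ m) → (m : ℤ) % 5 ≠ 0 := by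
    intro h hmod
    exact h (by omega)
  simp only [Set.mem_insert_iff, Set.mem_singleton_iff] at hmem ⊢
  rcases hmem with rfl | rfl | rfl | rfl | rfl | rfl | rfl | rfl | rfl
  · tauto
  · tauto
  · tauto
  · tauto
  · -- n = 5 : contradiction
    exfalso
    have hm5 : ¬ (5 ∣ m) := by
      intro hd
      have : (5 : ℕ) ∣ 1 := hco ▸ Nat.dvd_gcd hd (by norm_num)
      omega
    refine sin_exclude θ (5 - 4 * (m : ℤ)) ?_ (by omega) ?_ hsin
    · rw [hθ]; push_cast; ring
    · have := h5m hm5; omega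
  · tauto
  · tauto
  · -- n = 10 : contradiction
    exfalso
    have hm5 : ¬ (5 ∣ m) := by
      intro hd
      have : (5 : ℕ) ∣ 1 := hco ▸ Nat.dvd_gcd hd (by norm_num)
      omega
    refine sin_exclude θ (5 - 2 * (m : ℤ)) ?_ (by omega) ?_ hsin
    · rw [hθ]; push_cast; ring
    · have := h5m hm5; omega
  · tauto
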